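/- arXiv:2404.05942 — 3 statements merged into one kernel-verified Lean document; each statement's English description precedes it below -/
import Mathlib

section
/- Let l ≥ 1 and s ≥ 0 be integers with l < s+1. There exists n₀ = n₀(s,l) such that for all n ≥ n₀: ex(n, {K_3, (s+1)S_l}) = s(n−s), and the complete bipartite graph K_{s,n−s} is the unique (up to isomorphism) {K_3, (s+1)S_l}-free graph on n vertices with s(n−s) edges. -/
open SimpleGraph

/-- `G` contains a copy of `H` (an injective graph homomorphism). -/
def Contains {α β : Type*} (G : SimpleGraph β) (H : SimpleGraph α) : Prop :=
  ∃ f : α ↪ β, ∀ a b, H.Adj a b → G.Adj (f a) (f b)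

/-- `G` is `H`-free. -/
def Free {α β : Type*} (G : SimpleGraph β) (H : SimpleGraph α) : Prop := ¬ Contains G H

/-- The Turán-type extremal number for a property `P` of graphs on `Fin n`. -/
noncomputable def exNum (n : ℕ) (P : SimpleGraph (Fin n) → Prop) : ℕ :=
  sSup {m | ∃ G : SimpleGraph (Fin n), P G ∧ G.edgeSet.ncard = m}

/-- The star forest consisting of `c` disjoint copies of the star `S_l`. -/
def starForest (c l : ℕ) : SimpleGraph (Fin c × (Unit ⊕ Fin l)) :=
  SimpleGraph.fromRel (fun x y => x.1 = y.1 ∧ x.2.isLeft ≠ y.2.isLeft)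

/-- The join of two graphs. -/
def join {α β : Type*} (G : SimpleGraph α) (H : SimpleGraph β) : SimpleGraph (α ⊕ β) :=
  SimpleGraph.fromRel (fun x y => match x, y with
    | Sum.inl a, Sum.inl b => G.Adj a b
    | Sum.inr a, Sum.inr b => H.Adj a b
    | _, _ => True)

/-!
Let `A` be the set of vertices of degree at least `(s + 1)(l + 1)`. A star centred in `A` can always
be given `l` fresh leaves, so `|A| ≤ s` and no `s + 1 - |A|` disjoint stars avoid `A`; absorbing
greedily at most `s - |A|` further stars into `A` yields a set `U ⊇ A` of bounded size such that
every vertex outside `U` has fewer than `l` neighbours outside `U`.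

For an edge `r r'` outside `U`, triangle-freeness makes the neighbourhoods of `r` and `r'` in `A`
disjoint. Averaging this over the edges outside `U` bounds the number of edges meeting `R = Uᶜ` by
`max(|A|, l - 1) |R| + O(1)`. If `|A| < s` this is below `s (n - s)` for large `n`. If `|A| = s`
then `U = A`, and the count is tight only when `A` and `Aᶜ` are independent and every vertex
outside `A` sees all of `A`, i.e. `G = K_{s, n - s}`.
-/

open Finset

namespace SimpleGraph

section Containment

variable {α β V W : Type*}

theorem contains_iff_isContained {G : SimpleGraph β} {H : SimpleGraph α} :
    Contains G H ↔ H ⊑ G :=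
  ⟨fun ⟨f, hf⟩ => ⟨⟨⟨f, hf _ _⟩, f.injective⟩⟩,
    fun ⟨f⟩ => ⟨f.toEmbedding, fun _ _ h => f.toHom.map_adj h⟩⟩

theorem Iso.contains_iff {G : SimpleGraph V} {G' : SimpleGraph W}
    {H : SimpleGraph α} (e : G ≃g G') : Contains G H ↔ Contains G' H := by
  simp only [contains_iff_isContained, isContained_congr_right e]

theorem free_completeGraph_three_iff {G : SimpleGraph V} :
    _root_.Free G (completeGraph (Fin 3)) ↔ G.CliqueFree 3 := by
  rw [_root_.Free, contains_iff_isContained, ← not_free, not_not,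
    ← Fintype.card_fin 3, cliqueFree_iff_top_free]
  rfl

theorem starForest_adj {c l : ℕ} {p q : Fin c × (Unit ⊕ Fin l)} :
    (starForest c l).Adj p q ↔ p.1 = q.1 ∧ p.2.isLeft ≠ q.2.isLeft := by
  rw [starForest, fromRel_adj]
  constructor
  · rintro ⟨-, h | ⟨h₁, h₂⟩⟩
    · exact h
    · exact ⟨h₁.symm, Ne.symm h₂⟩
  · rintro h
    exact ⟨fun hpq => h.2 (hpq ▸ rfl), Or.inl h⟩

theorem cliqueFree_three_completeBipartiteGraph :
    (completeBipartiteGraph α β).CliqueFree 3 :=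
  (CompleteBipartiteGraph.bicoloring α β).colorable.cliqueFree (by simp)

theorem not_contains_starForest_completeBipartiteGraph {s m l : ℕ} (hl : 1 ≤ l) :
    ¬ Contains (completeBipartiteGraph (Fin s) (Fin m)) (starForest (s + 1) l) := by
  rintro ⟨f, hf⟩
  have hleft : ∀ i, ∃ a : Fin s, ∃ u, f (i, u) = Sum.inl a := by
    intro i
    have hadj := hf (i, Sum.inl ()) (i, Sum.inr ⟨0, hl⟩) (starForest_adj.2 ⟨rfl, by simp⟩)
    rcases hc : f (i, Sum.inl ()) with a | b
    · exact ⟨a, _, hc⟩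
    rcases hℓ : f (i, Sum.inr ⟨0, hl⟩) with a | b'
    · exact ⟨a, _, hℓ⟩
    simp [hc, hℓ] at hadj
  choose ψ u hψ using hleft
  have hψ_inj : Function.Injective ψ := fun i j hij =>
    congrArg Prod.fst (f.injective ((hψ i).trans (hij ▸ (hψ j).symm)))
  simpa using Fintype.card_le_of_injective ψ hψ_inj

theorem ncard_edgeSet_completeBipartiteGraph (s m : ℕ) :
    (completeBipartiteGraph (Fin s) (Fin m)).edgeSet.ncard = s * m := by
  simp [Set.ncard_def, encard_edgeSet_completeBipartiteGraph]

theorem Iso.ncard_edgeSet_eq {G : SimpleGraph V} {H : SimpleGraph W} (e : G ≃g H) :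
    G.edgeSet.ncard = H.edgeSet.ncard := by
  rw [← Nat.card_coe_set_eq, ← Nat.card_coe_set_eq]
  exact Nat.card_congr e.mapEdgeSet

theorem ncard_edgeSet_eq_card_edgeFinset [Fintype V] (G : SimpleGraph V)
    [DecidableRel G.Adj] : G.edgeSet.ncard = #G.edgeFinset := by
  rw [← coe_edgeFinset, Set.ncard_coe_finset]

noncomputable def isoCompleteBipartiteGraphOfAdjIff {n s : ℕ} {G : SimpleGraph (Fin n)}
    {A : Finset (Fin n)} (hA : #A = s) (hG : ∀ x y, G.Adj x y ↔ (x ∈ A ↔ y ∉ A)) :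
    G ≃g completeBipartiteGraph (Fin s) (Fin (n - s)) :=
  let e : G ≃g completeBipartiteGraph {x // x ∈ A} {x // x ∉ A} :=
    { toEquiv := (Equiv.sumCompl (· ∈ A)).symm
      map_rel_iff' := by
        intro x y
        by_cases hx : x ∈ A <;> by_cases hy : y ∈ A <;>
          simp [hG, Equiv.sumCompl_symm_apply_of_pos, Equiv.sumCompl_symm_apply_of_neg, hx, hy] }
  e.trans <| completeBipartiteGraphCongr (A.equivFinOfCardEq hA)
    (Fintype.equivFinOfCardEq (by simp [Fintype.card_subtype_compl, hA]))

end Containment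

section Packing

variable {V : Type*} [DecidableEq V] {G : SimpleGraph V} {l k : ℕ} {W X : Finset V}

/-- `StarPacking G l k W`: `G` contains `k` vertex-disjoint stars `S_l` whose vertex set is `W`. -/
inductive StarPacking (G : SimpleGraph V) (l : ℕ) : ℕ → Finset V → Prop
  | nil : StarPacking G l 0 ∅
  | cons {k : ℕ} {W : Finset V} (v : V) (S : Finset V) :
      StarPacking G l k W → (∀ x ∈ S, G.Adj v x) → #S = l → Disjoint (insert v S) W →
      StarPacking G l (k + 1) (insert v S ∪ W)

namespace StarPacking

theorem card_le (h : StarPacking G l k W) : #W ≤ k * (l + 1) := by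
  induction h with
  | nil => simp
  | cons v S _ _ hS _ ih =>
    calc #(insert v S ∪ _) ≤ #(insert v S) + #_ := card_union_le _ _
      _ ≤ (l + 1) + _ * (l + 1) := add_le_add (hS ▸ card_insert_le v S) ih
      _ = _ := by ring

theorem exists_copy (h : StarPacking G l k W) :
    ∃ f : Fin k × (Unit ⊕ Fin l) ↪ V, (∀ p, f p ∈ W) ∧
      ∀ p q, (starForest k l).Adj p q → G.Adj (f p) (f q) := by
  induction h with
  | nil => exact ⟨⟨fun p => p.1.elim0, fun p => p.1.elim0⟩, fun p => p.1.elim0, fun p => p.1.elim0⟩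
  | @cons k W v S _ hadj hS hdisj ih =>
    obtain ⟨f, hfW, hf⟩ := ih
    let star : Unit ⊕ Fin l → V := Sum.elim (fun _ => v) fun j => (S.equivFinOfCardEq hS).symm j
    have hstar : ∀ u, star u ∈ insert v S := by rintro (_ | j) <;> simp [star]
    have hstar_inj : Function.Injective star := by
      have hvS : v ∉ S := fun hv => (hadj v hv).ne rfl
      rintro (_ | j) (_ | j') h <;> simp only [star, Sum.elim_inl, Sum.elim_inr] at h
      · rfl
      · exact absurd (h ▸ Finset.coe_mem _) hvS
      · exact absurd (h ▸ Finset.coe_mem _) hvS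
      · simpa using (S.equivFinOfCardEq hS).symm.injective (Subtype.ext h)
    let g : Fin (k + 1) × (Unit ⊕ Fin l) → V := fun p =>
      (Fin.cons star (fun i u => f (i, u)) : Fin (k + 1) → Unit ⊕ Fin l → V) p.1 p.2
    have hg_inj : Function.Injective g := by
      rintro ⟨i, u⟩ ⟨i', u'⟩ h
      cases i using Fin.cases <;> cases i' using Fin.cases <;>
        simp only [g, Fin.cons_zero, Fin.cons_succ] at h
      · rw [hstar_inj h]
      · exact absurd (hfW _) <| Finset.disjoint_left.1 hdisj (h ▸ hstar u)
      · exact absurd (hfW _) <| Finset.disjoint_left.1 hdisj (h ▸ hstar u')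
      · simpa using f.injective h
    refine ⟨⟨g, hg_inj⟩, ?_, ?_⟩
    · rintro ⟨i, u⟩
      cases i using Fin.cases
      · exact mem_union_left _ (hstar u)
      · exact mem_union_right _ (hfW _)
    · rintro ⟨i, u⟩ ⟨i', u'⟩ hpq
      obtain ⟨rfl, hu⟩ := starForest_adj.1 hpq
      cases i using Fin.cases
      · rcases u with _ | j <;> rcases u' with _ | j' <;> simp at hu
        · exact hadj _ (Finset.coe_mem _)
        · exact (hadj _ (Finset.coe_mem _)).symm
      · exact hf (_, u) (_, u') (starForest_adj.2 ⟨rfl, hu⟩)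

theorem contains (h : StarPacking G l k W) : Contains G (starForest k l) :=
  let ⟨f, _, hf⟩ := h.exists_copy
  ⟨f, hf⟩

end StarPacking

variable [Fintype V] [DecidableRel G.Adj]

namespace StarPacking

theorem exists_add {C : Finset V} (h : StarPacking G l k W) (hCW : Disjoint C W)
    (hdeg : ∀ c ∈ C, #W + #C * (l + 1) ≤ G.degree c) : ∃ W', StarPacking G l (k + #C) W' := by
  induction C using Finset.induction_on generalizing k W with
  | empty => exact ⟨W, h⟩
  | insert c C hc ih =>
    rw [card_insert_of_notMem hc] at hdeg ⊢
    obtain ⟨hcW, hCW⟩ := Finset.disjoint_insert_left.1 hCW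
    have hroom : l ≤ #(G.neighborFinset c \ (C ∪ W)) := by
      have h₁ := le_card_sdiff (C ∪ W) (G.neighborFinset c)
      have h₂ := card_union_le C W
      have h₃ := hdeg c (mem_insert_self c C)
      have h₄ : #C + 1 + l ≤ (#C + 1) * (l + 1) := by nlinarith
      rw [card_neighborFinset_eq_degree] at h₁
      omega
    obtain ⟨S, hS, hSl⟩ := exists_subset_card_eq hroom
    obtain ⟨hSC, hSW⟩ := disjoint_union_right.1 (disjoint_of_subset_left hS sdiff_disjoint)
    have hpack := h.cons c S (fun x hx => (mem_neighborFinset _ _ _).1 (mem_sdiff.1 (hS hx)).1)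
      hSl (Finset.disjoint_insert_left.2 ⟨hcW, hSW⟩)
    have hcard : #(insert c S ∪ W) ≤ #W + (l + 1) :=
      (card_union_le _ _).trans (by have := card_insert_le c S; omega)
    obtain ⟨W', hW'⟩ := ih hpack
      (by simp [disjoint_union_right, disjoint_insert_right, hc, hSC.symm, hCW])
      (fun c' hc' => le_trans (by nlinarith) (hdeg c' (mem_insert_of_mem hc')))
    exact ⟨W', by rwa [add_comm #C, ← add_assoc]⟩

end StarPacking

theorem exists_superset_of_le_card_neighborFinset_sdiff {X : Finset V} {v : V} (hv : v ∉ X)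
    (hvl : l ≤ #(G.neighborFinset v \ X)) :
    ∃ Y, X ⊆ Y ∧ #Y ≤ #X + (l + 1) ∧ ∀ {k W}, StarPacking G l k W → Disjoint W Y →
      ∃ W', StarPacking G l (k + 1) W' ∧ Disjoint W' X := by
  obtain ⟨S, hS, hSl⟩ := exists_subset_card_eq hvl
  have hSX : Disjoint (insert v S) X :=
    Finset.disjoint_insert_left.2 ⟨hv, disjoint_of_subset_left hS sdiff_disjoint⟩
  refine ⟨insert v S ∪ X, subset_union_right, ?_, fun hW hWY => ?_⟩
  · have := card_insert_le v S
    have := card_union_le (insert v S) X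
    omega
  · obtain ⟨hWS, hWX⟩ := disjoint_union_right.1 hWY
    exact ⟨_, hW.cons v S (fun x hx => (mem_neighborFinset _ _ _).1 (mem_sdiff.1 (hS hx)).1)
      hSl hWS.symm, disjoint_union_left.2 ⟨hSX, hWX⟩⟩

theorem exists_absorbing_of_forall_not_disjoint {k : ℕ} {X : Finset V}
    (hX : ∀ W, StarPacking G l (k + 1) W → ¬ Disjoint W X) :
    ∃ U, X ⊆ U ∧ #U ≤ #X + k * (l + 1) ∧ ∀ v ∉ U, #(G.neighborFinset v \ U) < l := by
  induction k generalizing X with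
  | zero =>
    refine ⟨X, subset_rfl, by simp, fun v hv => not_le.1 fun hvl => ?_⟩
    obtain ⟨Y, -, -, hY⟩ := exists_superset_of_le_card_neighborFinset_sdiff hv hvl
    obtain ⟨W, hW, hWX⟩ := hY .nil (by simp)
    exact hX W hW hWX
  | succ k ih =>
    by_cases hsmall : ∀ v ∉ X, #(G.neighborFinset v \ X) < l
    · exact ⟨X, subset_rfl, by omega, hsmall⟩
    push Not at hsmall
    obtain ⟨v, hv, hvl⟩ := hsmall
    obtain ⟨Y, hXY, hY, hYext⟩ := exists_superset_of_le_card_neighborFinset_sdiff hv hvl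
    obtain ⟨U, hYU, hU, hUl⟩ := ih fun W hW hWY =>
      let ⟨W', hW', hW'X⟩ := hYext hW hWY
      hX W' hW' hW'X
    exact ⟨U, hXY.trans hYU, by nlinarith, hUl⟩

end Packing

section Counting

variable {V : Type*} [Fintype V] [DecidableEq V] {G : SimpleGraph V} [DecidableRel G.Adj] {k : ℕ}

theorem sum_sum_neighborFinset_inter (P Q : Finset V) (f : V → ℕ) :
    ∑ x ∈ P, ∑ y ∈ G.neighborFinset x ∩ Q, f y = ∑ y ∈ Q, #(G.neighborFinset y ∩ P) * f y := by
  rw [sum_comm' (t' := Q) (s' := fun y => G.neighborFinset y ∩ P)]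
  · simp only [sum_const, smul_eq_mul]
  · simp only [mem_inter, mem_neighborFinset]
    exact fun x y => ⟨fun ⟨hx, hxy, hy⟩ => ⟨⟨hxy.symm, hx⟩, hy⟩,
      fun ⟨⟨hyx, hx⟩, hy⟩ => ⟨hx, hyx.symm, hy⟩⟩

theorem sum_card_neighborFinset_inter_comm (P Q : Finset V) :
    ∑ x ∈ P, #(G.neighborFinset x ∩ Q) = ∑ y ∈ Q, #(G.neighborFinset y ∩ P) := by
  simpa using G.sum_sum_neighborFinset_inter P Q 1

theorem card_neighborFinset_inter_add_compl (v : V) (P : Finset V) :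
    #(G.neighborFinset v ∩ P) + #(G.neighborFinset v ∩ Pᶜ) = G.degree v := by
  rw [← sdiff_eq_inter_compl, card_inter_add_card_sdiff, card_neighborFinset_eq_degree]

theorem two_mul_card_edgeFinset_eq (P : Finset V) :
    2 * #G.edgeFinset = ∑ x ∈ P, #(G.neighborFinset x ∩ P) +
      2 * ∑ y ∈ Pᶜ, #(G.neighborFinset y ∩ P) + ∑ y ∈ Pᶜ, #(G.neighborFinset y ∩ Pᶜ) := by
  rw [← sum_degrees_eq_twice_card_edges, ← sum_add_sum_compl P]
  simp only [← G.card_neighborFinset_inter_add_compl _ P, sum_add_distrib,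
    sum_card_neighborFinset_inter_comm P Pᶜ]
  ring

/-- Without triangles the two ends of an edge have disjoint neighbourhoods in `A`, so with
`t r = #A - #(N r ∩ A)` every edge `r r'` inside `R` has `#A ≤ t r + t r'`; sum over these edges. -/
theorem card_mul_sum_card_neighborFinset_inter_le (hG : G.CliqueFree 3) (A R : Finset V)
    (hR : ∀ r ∈ R, #(G.neighborFinset r ∩ R) ≤ k) :
    #A * ∑ r ∈ R, #(G.neighborFinset r ∩ R) ≤
      2 * k * ∑ r ∈ R, (#A - #(G.neighborFinset r ∩ A)) := by
  set t : V → ℕ := fun r => #A - #(G.neighborFinset r ∩ A)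
  have hedge : ∀ r r', G.Adj r r' → #A ≤ t r + t r' := by
    intro r r' hrr'
    have hdisj : Disjoint (G.neighborFinset r ∩ A) (G.neighborFinset r' ∩ A) := by
      refine Finset.disjoint_left.2 fun x hx hx' => ?_
      simp only [mem_inter, mem_neighborFinset] at hx hx'
      exact hG _ (is3Clique_triple_iff.2 ⟨hrr', hx.1, hx'.1⟩)
    have := card_le_card (union_subset inter_subset_right inter_subset_right :
      G.neighborFinset r ∩ A ∪ G.neighborFinset r' ∩ A ⊆ A)
    rw [card_union_of_disjoint hdisj] at this
    simp only [t]
    omega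
  calc #A * ∑ r ∈ R, #(G.neighborFinset r ∩ R)
      = ∑ r ∈ R, ∑ _r' ∈ G.neighborFinset r ∩ R, #A := by simp [mul_sum, mul_comm]
    _ ≤ ∑ r ∈ R, ∑ r' ∈ G.neighborFinset r ∩ R, (t r + t r') := by
      gcongr with r _ r' hr'
      exact hedge r r' ((mem_neighborFinset _ _ _).1 (mem_inter.1 hr').1)
    _ = 2 * ∑ r ∈ R, #(G.neighborFinset r ∩ R) * t r := by
      simp only [sum_add_distrib, sum_const, smul_eq_mul, sum_sum_neighborFinset_inter]
      ring
    _ ≤ 2 * ∑ r ∈ R, k * t r := by gcongr with r hr; exact hR r hr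
    _ = 2 * k * ∑ r ∈ R, t r := by rw [← mul_sum, mul_assoc]

theorem sum_card_neighborFinset_inter_add_sub (A R : Finset V) :
    ∑ r ∈ R, #(G.neighborFinset r ∩ A) + ∑ r ∈ R, (#A - #(G.neighborFinset r ∩ A)) = #A * #R := by
  rw [← sum_add_distrib, sum_congr rfl fun r _ => Nat.add_sub_cancel' (card_le_card
    inter_subset_right), sum_const, smul_eq_mul, mul_comm]

theorem sum_two_mul_card_neighborFinset_inter_add_le (hG : G.CliqueFree 3) {A R : Finset V}
    {m : ℕ} (hR : ∀ r ∈ R, #(G.neighborFinset r ∩ R) ≤ k) (hAm : #A ≤ m) (hkm : k ≤ m) :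
    ∑ r ∈ R, (2 * #(G.neighborFinset r ∩ A) + #(G.neighborFinset r ∩ R)) ≤ 2 * m * #R := by
  have hLP := card_mul_sum_card_neighborFinset_inter_le hG A R hR
  have hsplit := G.sum_card_neighborFinset_inter_add_sub A R
  have hRR : ∑ r ∈ R, #(G.neighborFinset r ∩ R) ≤ k * #R := by
    simpa [mul_comm] using sum_le_card_nsmul R _ k hR
  rw [sum_add_distrib, ← mul_sum]
  rcases (#A).eq_zero_or_pos with hA | hA
  · have : ∑ r ∈ R, #(G.neighborFinset r ∩ A) = 0 := by simp_all
    nlinarith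
  · refine le_of_mul_le_mul_left ?_ hA
    have := Nat.mul_le_mul_right (∑ r ∈ R, (#A - #(G.neighborFinset r ∩ A))) hkm
    have := Nat.mul_le_mul_right (∑ r ∈ R, #(G.neighborFinset r ∩ A)) hAm
    nlinarith

theorem two_mul_card_edgeFinset_le (hG : G.CliqueFree 3) {A U : Finset V}
    {D m : ℕ} (hD : ∀ u ∈ U \ A, G.degree u ≤ D)
    (hU : ∀ r ∉ U, #(G.neighborFinset r ∩ Uᶜ) ≤ k) (hAm : #A ≤ m) (hkm : k ≤ m) :
    2 * #G.edgeFinset ≤ #U * #U + 2 * (#U * D) + 2 * m * #Uᶜ := by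
  have hUU : ∑ x ∈ U, #(G.neighborFinset x ∩ U) ≤ #U * #U :=
    sum_le_card_nsmul U _ _ fun _ _ => card_le_card inter_subset_right
  have hsplit : ∀ r, #(G.neighborFinset r ∩ U) ≤
      #(G.neighborFinset r ∩ A) + #(G.neighborFinset r ∩ (U \ A)) := fun r =>
    (card_le_card fun x hx => by by_cases x ∈ A <;> simp_all).trans (card_union_le _ _)
  have hUA : ∑ r ∈ Uᶜ, #(G.neighborFinset r ∩ (U \ A)) ≤ #U * D := by
    rw [← sum_card_neighborFinset_inter_comm]
    calc ∑ u ∈ U \ A, #(G.neighborFinset u ∩ Uᶜ) ≤ ∑ u ∈ U \ A, D :=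
          sum_le_sum fun u hu => (card_le_card inter_subset_left).trans
            ((card_neighborFinset_eq_degree G u).trans_le (hD u hu))
      _ ≤ #U * D := by rw [sum_const, smul_eq_mul]; gcongr; exact sdiff_subset
  have hR := sum_two_mul_card_neighborFinset_inter_add_le hG (A := A) (R := Uᶜ)
    (fun r hr => hU r (mem_compl.1 hr)) hAm hkm
  rw [sum_add_distrib, ← mul_sum] at hR
  have := sum_le_sum fun r (_ : r ∈ Uᶜ) => hsplit r
  rw [sum_add_distrib] at this
  rw [G.two_mul_card_edgeFinset_eq U]
  linarith

/-- `∑ r ∈ Aᶜ, (#A - #(N r ∩ A))` counts the non-adjacent pairs between `Aᶜ` and `A`. -/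
theorem card_mul_two_mul_card_edgeFinset_add_le (hG : G.CliqueFree 3) {A : Finset V}
    (hA : ∀ r ∉ A, #(G.neighborFinset r ∩ Aᶜ) ≤ k) :
    #A * (2 * #G.edgeFinset) + 2 * #A * ∑ r ∈ Aᶜ, (#A - #(G.neighborFinset r ∩ A)) ≤
      #A * ∑ x ∈ A, #(G.neighborFinset x ∩ A) + 2 * (#A * #A * #Aᶜ) +
        2 * k * ∑ r ∈ Aᶜ, (#A - #(G.neighborFinset r ∩ A)) := by
  have hLP := card_mul_sum_card_neighborFinset_inter_le hG A Aᶜ fun r hr => hA r (mem_compl.1 hr)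
  have hsplit := congrArg (#A * ·) (G.sum_card_neighborFinset_inter_add_sub A Aᶜ)
  simp only [mul_add] at hsplit
  rw [G.two_mul_card_edgeFinset_eq A]
  linarith

theorem card_edgeFinset_lt_of_adj (hG : G.CliqueFree 3) {A : Finset V} (hkA : k < #A)
    (hA : ∀ r ∉ A, #(G.neighborFinset r ∩ Aᶜ) ≤ k) (hcard : #A ^ 3 < 2 * #Aᶜ) {x y : V}
    (hx : x ∈ A) (hy : y ∈ A) (hxy : G.Adj x y) : #G.edgeFinset < #A * #Aᶜ := by
  have key := card_mul_two_mul_card_edgeFinset_add_le hG hA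
  set T := ∑ r ∈ Aᶜ, (#A - #(G.neighborFinset r ∩ A))
  have hkT := Nat.mul_le_mul_right T hkA.le
  have hAA : ∑ x ∈ A, #(G.neighborFinset x ∩ A) ≤ #A * #A :=
    sum_le_card_nsmul A _ _ fun _ _ => card_le_card inter_subset_right
  have hT : #Aᶜ ≤ T := by
    refine card_eq_sum_ones Aᶜ ▸ sum_le_sum fun r hr => Nat.one_le_iff_ne_zero.2 ?_
    refine Nat.sub_ne_zero_of_lt (card_lt_card ⟨inter_subset_right, fun hsub => ?_⟩)
    have hrx := (mem_neighborFinset _ _ _).1 (mem_inter.1 (hsub hx)).1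
    have hry := (mem_neighborFinset _ _ _).1 (mem_inter.1 (hsub hy)).1
    exact hG _ (is3Clique_triple_iff.2 ⟨hrx, hry, hxy⟩)
  refine Nat.lt_of_mul_lt_mul_left (a := #A) ?_
  have := Nat.mul_le_mul_left #A hAA
  nlinarith

theorem card_edgeFinset_le_and_adj_iff (hG : G.CliqueFree 3) {A : Finset V} (hkA : k < #A)
    (hA : ∀ r ∉ A, #(G.neighborFinset r ∩ Aᶜ) ≤ k) (hcard : #A ^ 3 < 2 * #Aᶜ) :
    #G.edgeFinset ≤ #A * #Aᶜ ∧
      (#G.edgeFinset = #A * #Aᶜ → ∀ x y, G.Adj x y ↔ (x ∈ A ↔ y ∉ A)) := by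
  by_cases hind : ∃ x ∈ A, ∃ y ∈ A, G.Adj x y
  · obtain ⟨x, hx, y, hy, hxy⟩ := hind
    have hlt := card_edgeFinset_lt_of_adj hG hkA hA hcard hx hy hxy
    exact ⟨hlt.le, fun h => absurd h hlt.ne⟩
  push Not at hind
  have key := card_mul_two_mul_card_edgeFinset_add_le hG hA
  have hLP := card_mul_sum_card_neighborFinset_inter_le hG A Aᶜ fun r hr => hA r (mem_compl.1 hr)
  set T := ∑ r ∈ Aᶜ, (#A - #(G.neighborFinset r ∩ A))
  have hkT := Nat.mul_le_mul_right T hkA.le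
  have ha : 0 < #A := by omega
  have hAA : ∀ x ∈ A, G.neighborFinset x ∩ A = ∅ := fun x hx => by
    ext y; simpa using fun hxy hy => hind x hx y hy hxy
  simp only [sum_congr rfl fun x hx => congrArg card (hAA x hx), card_empty, sum_const_zero,
    mul_zero, zero_add] at key
  refine ⟨le_of_mul_le_mul_left (by nlinarith) ha, fun heq => ?_⟩
  have hT : T = 0 := by
    rw [heq] at key
    by_contra hT
    nlinarith [Nat.mul_lt_mul_of_pos_right hkA (Nat.pos_of_ne_zero hT)]
  have hRR : ∑ r ∈ Aᶜ, #(G.neighborFinset r ∩ Aᶜ) = 0 := by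
    rw [hT, mul_zero] at hLP
    exact (Nat.mul_eq_zero.1 (Nat.le_zero.1 hLP)).resolve_left ha.ne'
  have hfull : ∀ y ∉ A, A ⊆ G.neighborFinset y := fun y hy =>
    have := (sum_eq_zero_iff.1 hT) y (mem_compl.2 hy)
    inter_eq_right.1 (eq_of_subset_of_card_le inter_subset_right (by omega))
  have hRR' := fun y (hy : y ∉ A) => card_eq_zero.1 ((sum_eq_zero_iff.1 hRR) y (mem_compl.2 hy))
  intro x y
  by_cases hx : x ∈ A <;> by_cases hy : y ∈ A <;> simp only [hx, hy, iff_true,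
    not_true, not_false_iff, iff_false]
  · exact hind x hx y hy
  · exact ((mem_neighborFinset _ _ _).1 (hfull y hy hx)).symm
  · exact (mem_neighborFinset _ _ _).1 (hfull x hx hy)
  · exact fun hxy => by simpa [hy, hxy] using (Finset.ext_iff.1 (hRR' x hx) y)

end Counting

section Extremal

variable {V : Type*} [Fintype V] [DecidableEq V] {G : SimpleGraph V} [DecidableRel G.Adj] {l s : ℕ}

/-- The threshold `(s + 1) (l + 1)` bounds the number of vertices of `s + 1` stars, so a vertex of
this degree can always be given `l` fresh leaves. -/
abbrev highDegreeVertices (G : SimpleGraph V) [DecidableRel G.Adj] (l s : ℕ) : Finset V :=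
  {v | (s + 1) * (l + 1) ≤ G.degree v}

theorem card_highDegreeVertices_le (hS : ¬ Contains G (starForest (s + 1) l)) :
    #(G.highDegreeVertices l s) ≤ s := by
  by_contra! h
  obtain ⟨C, hCA, hC⟩ := exists_subset_card_eq (Nat.succ_le_of_lt h)
  obtain ⟨W, hW⟩ := StarPacking.nil.exists_add (G := G) (l := l) (C := C) (by simp)
    fun c hc => by simpa [hC] using (mem_filter.1 (hCA hc)).2
  rw [zero_add, hC] at hW
  exact hS hW.contains

theorem not_disjoint_highDegreeVertices (hS : ¬ Contains G (starForest (s + 1) l)) {W : Finset V}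
    (hW : StarPacking G l (s - #(G.highDegreeVertices l s) + 1) W) :
    ¬ Disjoint W (G.highDegreeVertices l s) := fun hWA => by
  have hA := card_highDegreeVertices_le hS
  generalize hk : s - #(G.highDegreeVertices l s) + 1 = k at hW
  have hk' : k + #(G.highDegreeVertices l s) = s + 1 := by omega
  obtain ⟨W', hW'⟩ := hW.exists_add hWA.symm fun c hc => le_trans (by
    have := hW.card_le
    rw [← hk', add_mul]
    omega) (mem_filter.1 hc).2
  exact hS (hk' ▸ hW'.contains)

theorem card_edgeFinset_lt_of_card_lt (hG : G.CliqueFree 3) {A U : Finset V}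
    (hls : l ≤ s) (hV : 4 * (s + 1) ^ 3 * (l + 1) ^ 2 ≤ Fintype.card V) (hAs : #A < s)
    (hAdeg : ∀ u ∉ A, G.degree u ≤ (s + 1) * (l + 1)) (hUs : #U ≤ (s + 1) * (l + 1))
    (hUc : ∀ r ∉ U, #(G.neighborFinset r ∩ Uᶜ) ≤ l - 1) :
    #G.edgeFinset < s * (Fintype.card V - s) := by
  have hE := two_mul_card_edgeFinset_le hG (m := s - 1)
    (fun u hu => hAdeg u (mem_sdiff.1 hu).2) hUc (by omega) (by omega)
  have hc : #Uᶜ ≤ Fintype.card V := card_le_univ _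
  set P := (s + 1) * (l + 1)
  have hsP : s + 1 ≤ P := Nat.le_mul_of_pos_right _ (by omega)
  have hV' : 4 * ((s + 1) * (P * P)) ≤ Fintype.card V := le_of_eq_of_le (by ring) hV
  have hsV : s ≤ Fintype.card V := by nlinarith
  zify [hsV, (by omega : 1 ≤ s)] at hE ⊢
  nlinarith

theorem card_edgeFinset_le_and_exists_of_free (hl : 1 ≤ l) (hls : l ≤ s)
    (hV : 4 * (s + 1) ^ 3 * (l + 1) ^ 2 ≤ Fintype.card V) (hG : G.CliqueFree 3)
    (hS : ¬ Contains G (starForest (s + 1) l)) :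
    #G.edgeFinset ≤ s * (Fintype.card V - s) ∧ (#G.edgeFinset = s * (Fintype.card V - s) →
      ∃ A : Finset V, #A = s ∧ ∀ x y, G.Adj x y ↔ (x ∈ A ↔ y ∉ A)) := by
  have hAs := card_highDegreeVertices_le hS
  have hAdeg : ∀ u ∉ G.highDegreeVertices l s, G.degree u ≤ (s + 1) * (l + 1) := fun u hu =>
    (not_le.1 fun h => hu (mem_filter.2 ⟨mem_univ u, h⟩)).le
  obtain ⟨U, hAU, hU, hUl⟩ :=
    exists_absorbing_of_forall_not_disjoint fun W => not_disjoint_highDegreeVertices hS (W := W)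
  generalize G.highDegreeVertices l s = A at *
  have hUc : ∀ r ∉ U, #(G.neighborFinset r ∩ Uᶜ) ≤ l - 1 := fun r hr => by
    have := hUl r hr
    rw [sdiff_eq_inter_compl] at this
    omega
  have hUV := card_add_card_compl U
  rcases hAs.lt_or_eq with hlt | heq
  · have hUs : #U ≤ (s + 1) * (l + 1) := hU.trans <| by
      have := Nat.mul_le_mul_right (l + 1) (Nat.add_sub_cancel' hAs).le
      nlinarith
    have hlt := card_edgeFinset_lt_of_card_lt hG hls hV hlt hAdeg hUs hUc
    exact ⟨hlt.le, fun h => absurd h hlt.ne⟩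
  · rw [heq, Nat.sub_self, zero_mul, add_zero] at hU
    obtain rfl : A = U := eq_of_subset_of_card_le hAU (heq ▸ hU)
    have hV' : (s + 1) ^ 3 * 4 ≤ #A + #Aᶜ := hUV ▸ le_trans (by
      rw [mul_comm 4]; exact Nat.le_mul_of_pos_right _ (by positivity)) hV
    obtain ⟨hle, hchar⟩ := card_edgeFinset_le_and_adj_iff hG (k := l - 1) (by omega) hUc
      (by rw [heq]; nlinarith)
    rw [← heq, ← hUV, Nat.add_sub_cancel_left]
    exact ⟨hle, fun h => ⟨_, rfl, hchar h⟩⟩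

theorem ncard_edgeSet_le_of_free {n l s : ℕ} (hl : 1 ≤ l) (hls : l ≤ s)
    (hn : 4 * (s + 1) ^ 3 * (l + 1) ^ 2 ≤ n) {G : SimpleGraph (Fin n)}
    (h3 : _root_.Free G (completeGraph (Fin 3))) (hS : _root_.Free G (starForest (s + 1) l)) :
    G.edgeSet.ncard ≤ s * (n - s) := by
  classical
  simpa [ncard_edgeSet_eq_card_edgeFinset] using (card_edgeFinset_le_and_exists_of_free hl hls
    (by simpa using hn) (free_completeGraph_three_iff.1 h3) hS).1

theorem free_and_ncard_edgeSet_eq_iff {n l s : ℕ} (hl : 1 ≤ l) (hls : l ≤ s)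
    (hn : 4 * (s + 1) ^ 3 * (l + 1) ^ 2 ≤ n) (G : SimpleGraph (Fin n)) :
    ((_root_.Free G (completeGraph (Fin 3)) ∧ _root_.Free G (starForest (s + 1) l)) ∧
      G.edgeSet.ncard = s * (n - s)) ↔
      Nonempty (G ≃g completeBipartiteGraph (Fin s) (Fin (n - s))) := by
  classical
  refine ⟨fun ⟨⟨h3, hS⟩, hE⟩ => ?_, fun ⟨e⟩ => ⟨⟨?_, ?_⟩, ?_⟩⟩
  · rw [ncard_edgeSet_eq_card_edgeFinset] at hE
    obtain ⟨A, hA, hadj⟩ := (card_edgeFinset_le_and_exists_of_free hl hls (by simpa using hn)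
      (free_completeGraph_three_iff.1 h3) hS).2 (by simpa using hE)
    exact ⟨isoCompleteBipartiteGraphOfAdjIff hA hadj⟩
  · exact mt e.contains_iff.1
      (free_completeGraph_three_iff.2 cliqueFree_three_completeBipartiteGraph)
  · exact mt e.contains_iff.1 (not_contains_starForest_completeBipartiteGraph hl)
  · exact e.ncard_edgeSet_eq.trans (ncard_edgeSet_completeBipartiteGraph _ _)

end Extremal

end SimpleGraph

theorem stmt3 (l s : ℕ) (hl : 1 ≤ l) (hls : l < s + 1) :
    ∃ n₀ : ℕ, ∀ n, n₀ ≤ n →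
      exNum n (fun G => _root_.Free G (completeGraph (Fin 3)) ∧ _root_.Free G (starForest (s + 1) l)) =
        s * (n - s) ∧
      ∀ G : SimpleGraph (Fin n),
        ((_root_.Free G (completeGraph (Fin 3)) ∧ _root_.Free G (starForest (s + 1) l)) ∧
            G.edgeSet.ncard = s * (n - s)) ↔
          Nonempty (G ≃g completeBipartiteGraph (Fin s) (Fin (n - s))) := by
  refine ⟨4 * (s + 1) ^ 3 * (l + 1) ^ 2, fun n hn =>
    ⟨IsGreatest.csSup_eq ⟨?_, ?_⟩, free_and_ncard_edgeSet_eq_iff hl (by omega) hn⟩⟩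
  · have hsn : s ≤ n := by
      have := Nat.le_self_pow (n := 3) (by norm_num) (s + 1)
      have := Nat.one_le_pow 2 (l + 1) (by omega)
      nlinarith
    let e : Fin n ≃ Fin s ⊕ Fin (n - s) := (finCongr (by omega)).trans finSumFinEquiv.symm
    exact ⟨_, (free_and_ncard_edgeSet_eq_iff hl (by omega) hn _).2
      ⟨Iso.comap e (completeBipartiteGraph (Fin s) (Fin (n - s)))⟩⟩
  · rintro _ ⟨G, ⟨h3, hS⟩, rfl⟩
    exact ncard_edgeSet_le_of_free hl (by omega) hn h3 hS
end

section
/- Let l ≥ 1 and let n ≥ l² + 2 be odd. Then there exists a K_3-free graph R on a vertex set V of size n, a partition V = V₁ ∪ V₂ with |V₁| = ⌊n/2⌋ and |V₂| = ⌈n/2⌉, and a vertex v₀ ∈ V₂ such that: every vertex of R other than v₀ has degree l; the degree of v₀ equals l if l·n is even and l−1 if l·n is odd; and the induced subgraph R[V \ {v₀}] is bipartite with parts V₁ and V₂ \ {v₀}. -/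
open SimpleGraph

/-!
Write `n = 2m + 1` and take two copies of `ZMod m` (the left part `V₁` and the right part
`V₂ \ {v₀}`), joining the left `a` to the right `a + j` for every `j < l`: an `l`-regular
bipartite circulant. For each of the `⌊l/2⌋` "spikes" `s = k l` (`k < l/2`) the edge between
the two copies of `s` is removed and replaced by the path `s - v₀ - s`. Degrees away from `v₀`
stay `l`, and `v₀` gets degree `2⌊l/2⌋`. A triangle would have to use `v₀` and an edge between
two distinct spikes; but distinct spikes are at least `l` apart, and as `l²/2 < m` there is no
wrap-around modulo `m`, so no such edge exists.
-/

open Function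

lemma ZMod.natCast_fin_injective {l m : ℕ} (h : l ≤ m) :
    Injective fun j : Fin l => ((j : ℕ) : ZMod m) := by
  intro i j hij
  have := congrArg ZMod.val hij
  simp only [ZMod.val_natCast_of_lt (i.2.trans_le h), ZMod.val_natCast_of_lt (j.2.trans_le h)]
    at this
  exact Fin.ext this

lemma Set.ncard_eq_of_replace_zero {V : Type*} {l : ℕ} {s : Set V} {v : V} {φ : Fin l → V}
    (hφ : Injective φ) (hv : v ∉ range φ) {p : Prop} (hp : p → 0 < l)
    (hs : ∀ y, y ∈ s ↔ p ∧ y = v ∨ ∃ j : Fin l, ¬((j : ℕ) = 0 ∧ p) ∧ φ j = y) :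
    s.ncard = l := by
  classical
  set ψ : Fin l → V := fun j => if (j : ℕ) = 0 ∧ p then v else φ j
  have hψ : Injective ψ := by
    intro i j hij
    simp only [ψ] at hij
    split_ifs at hij with hi hj hj
    · exact Fin.ext (hi.1.trans hj.1.symm)
    · exact absurd ⟨j, hij.symm⟩ hv
    · exact absurd ⟨i, hij⟩ hv
    · exact hφ hij
  have hrange : s = range ψ := by
    ext y
    rw [hs]
    constructor
    · rintro (⟨hp', rfl⟩ | ⟨j, hj, rfl⟩)
      · exact ⟨⟨0, hp hp'⟩, by simp [ψ, hp']⟩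
      · exact ⟨j, by simp [ψ, hj]⟩
    · rintro ⟨j, rfl⟩
      by_cases hj : (j : ℕ) = 0 ∧ p
      · exact Or.inl ⟨hj.2, by simp [ψ, hj]⟩
      · exact Or.inr ⟨j, hj, by simp [ψ, hj]⟩
  rw [hrange, ncard_range_of_injective hψ, Nat.card_eq_fintype_card, Fintype.card_fin]

lemma free_completeGraph_of_cliqueFree {V : Type*} {G : SimpleGraph V} {k : ℕ}
    (h : G.CliqueFree k) : _root_.Free G (completeGraph (Fin k)) :=
  fun ⟨f, hf⟩ => (cliqueFree_iff.mp h).false ⟨⟨f, hf _ _⟩, f.injective⟩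

namespace ReroutedCirculant

/-- `inl a` is the left copy of `a`, `inr (some b)` the right copy of `b`, and `inr none` is the
extra vertex `v₀`. -/
abbrev Vertex (m : ℕ) := ZMod m ⊕ Option (ZMod m)

def spikes (m l : ℕ) : Set (ZMod m) := Set.range fun k : Fin (l / 2) => ((k * l : ℕ) : ZMod m)

variable {m : ℕ} (l : ℕ)

def Rel : Vertex m → Vertex m → Prop
  | .inl a, .inr (some b) => ∃ j < l, ¬(j = 0 ∧ a ∈ spikes m l) ∧ a + j = b
  | .inl a, .inr none => a ∈ spikes m l
  | .inr (some b), .inr none => b ∈ spikes m l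
  | _, _ => False

def graph (m l : ℕ) : SimpleGraph (Vertex m) := .fromRel (Rel l)

variable {l}

@[simp] lemma not_adj_inl_inl (a a' : ZMod m) : ¬ (graph m l).Adj (.inl a) (.inl a') := by
  simp [graph, Rel]

@[simp] lemma not_adj_some_some (b b' : ZMod m) :
    ¬ (graph m l).Adj (.inr (some b)) (.inr (some b')) := by
  simp [graph, Rel]

@[simp] lemma adj_inl_none (a : ZMod m) :
    (graph m l).Adj (.inl a) (.inr none) ↔ a ∈ spikes m l := by
  simp [graph, Rel]

@[simp] lemma adj_some_none (b : ZMod m) :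
    (graph m l).Adj (.inr (some b)) (.inr none) ↔ b ∈ spikes m l := by
  simp [graph, Rel]

@[simp] lemma adj_none_inl (a : ZMod m) :
    (graph m l).Adj (.inr none) (.inl a) ↔ a ∈ spikes m l := by
  simp [graph, Rel]

@[simp] lemma adj_none_some (b : ZMod m) :
    (graph m l).Adj (.inr none) (.inr (some b)) ↔ b ∈ spikes m l := by
  simp [graph, Rel]

@[simp] lemma adj_some_inl (a b : ZMod m) :
    (graph m l).Adj (.inr (some b)) (.inl a) ↔ (graph m l).Adj (.inl a) (.inr (some b)) :=
  SimpleGraph.adj_comm _ _ _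

lemma adj_inl_some (a b : ZMod m) : (graph m l).Adj (.inl a) (.inr (some b)) ↔
    ∃ j < l, ¬(j = 0 ∧ a ∈ spikes m l) ∧ a + j = b := by
  simp [graph, Rel]

lemma pos_of_mem_spikes {a : ZMod m} (ha : a ∈ spikes m l) : 0 < l := by
  obtain ⟨k, -⟩ := ha
  have := k.2
  omega

lemma spike_add_lt (hm : l * l + 1 ≤ 2 * m) (k : Fin (l / 2)) : k * l + l < m := by
  have hk : 2 * ((k : ℕ) + 1) ≤ l := by omega
  nlinarith

lemma spike_injective (hm : l * l + 1 ≤ 2 * m) :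
    Injective fun k : Fin (l / 2) => ((k * l : ℕ) : ZMod m) := by
  intro k k' h
  have := spike_add_lt hm k
  have := spike_add_lt hm k'
  simp only at h
  rw [ZMod.natCast_eq_natCast_iff', Nat.mod_eq_of_lt (by omega), Nat.mod_eq_of_lt (by omega)] at h
  exact Fin.ext (Nat.eq_of_mul_eq_mul_right (by have := k.2; omega) h)

lemma spike_add_eq_spike (hm : l * l + 1 ≤ 2 * m) {a b : ZMod m} (ha : a ∈ spikes m l)
    (hb : b ∈ spikes m l) {j : ℕ} (hj : j < l) (hab : a + j = b) : j = 0 := by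
  obtain ⟨k, rfl⟩ := ha
  obtain ⟨k', rfl⟩ := hb
  have := spike_add_lt hm k
  have := spike_add_lt hm k'
  rw [← Nat.cast_add, ZMod.natCast_eq_natCast_iff', Nat.mod_eq_of_lt (by omega),
    Nat.mod_eq_of_lt (by omega)] at hab
  rcases lt_or_ge (k : ℕ) k' with h | h <;> nlinarith

lemma not_adj_spikes (hm : l * l + 1 ≤ 2 * m) {a b : ZMod m} (ha : a ∈ spikes m l)
    (hb : b ∈ spikes m l) : ¬ (graph m l).Adj (.inl a) (.inr (some b)) := by
  rw [adj_inl_some]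
  rintro ⟨j, hj, hne, hab⟩
  exact hne ⟨spike_add_eq_spike hm ha hb hj hab, ha⟩

lemma cliqueFree_three (hm : l * l + 1 ≤ 2 * m) : (graph m l).CliqueFree 3 := by
  intro s hs
  rw [SimpleGraph.is3Clique_iff] at hs
  obtain ⟨x, y, z, hxy, hxz, hyz, -⟩ := hs
  rcases x with a | _ | b <;> rcases y with a' | _ | b' <;> rcases z with a'' | _ | b'' <;>
    simp_all [not_adj_spikes hm]

lemma ncard_neighborSet_inl (hm : l * l + 1 ≤ 2 * m) (a : ZMod m) :
    ((graph m l).neighborSet (.inl a)).ncard = l := by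
  refine Set.ncard_eq_of_replace_zero (φ := fun j => .inr (some (a + ((j : ℕ) : ZMod m))))
    (v := .inr none) (p := a ∈ spikes m l) ?_ (by simp) pos_of_mem_spikes ?_
  · exact Sum.inr_injective.comp <| (Option.some_injective _).comp <|
      (add_right_injective a).comp (ZMod.natCast_fin_injective (by nlinarith))
  · rintro (a' | _ | b)
    · simp
    · simp
    · simp [adj_inl_some, Fin.exists_iff, and_left_comm]

lemma ncard_neighborSet_some (hm : l * l + 1 ≤ 2 * m) (b : ZMod m) :
    ((graph m l).neighborSet (.inr (some b))).ncard = l := by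
  refine Set.ncard_eq_of_replace_zero (φ := fun j => .inl (b - ((j : ℕ) : ZMod m)))
    (v := .inr none) (p := b ∈ spikes m l) ?_ (by simp) pos_of_mem_spikes ?_
  · exact Sum.inl_injective.comp <|
      (sub_right_injective (b := b)).comp (ZMod.natCast_fin_injective (by nlinarith))
  · rintro (a | _ | b')
    · simp only [SimpleGraph.mem_neighborSet, adj_some_inl, adj_inl_some, reduceCtorEq,
        and_false, false_or, Sum.inl.injEq, Fin.exists_iff, exists_prop, sub_eq_iff_eq_add]
      refine exists_congr fun j => and_congr_right fun _ => ?_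
      rw [eq_comm (a := b)]
      constructor <;> rintro ⟨hne, rfl⟩ <;>
        exact ⟨fun ⟨h0, hs⟩ => hne ⟨h0, by simpa [h0] using hs⟩, rfl⟩
    · simp
    · simp

lemma ncard_neighborSet_of_ne_none (hm : l * l + 1 ≤ 2 * m) {x : Vertex m}
    (hx : x ≠ .inr none) : ((graph m l).neighborSet x).ncard = l := by
  rcases x with a | _ | b
  · exact ncard_neighborSet_inl hm a
  · exact absurd rfl hx
  · exact ncard_neighborSet_some hm b

lemma ncard_neighborSet_none (hm : l * l + 1 ≤ 2 * m) :
    ((graph m l).neighborSet (.inr none)).ncard = 2 * (l / 2) := by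
  set σ := fun k : Fin (l / 2) => ((k * l : ℕ) : ZMod m)
  have hrange : (graph m l).neighborSet (.inr none) =
      Set.range (Sum.elim (Sum.inl ∘ σ) (Sum.inr ∘ some ∘ σ)) := by
    ext (a | _ | b) <;> simp [spikes, σ]
  have hinj : Injective (Sum.elim (Sum.inl ∘ σ) (Sum.inr ∘ some ∘ σ) : _ → Vertex m) :=
    (Sum.inl_injective.comp (spike_injective hm)).sumElim
      (Sum.inr_injective.comp <| (Option.some_injective _).comp (spike_injective hm)) (by simp)
  rw [hrange, Set.ncard_range_of_injective hinj]
  simp [two_mul]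

end ReroutedCirculant

theorem stmt7_general (l n : ℕ) (hn : l ^ 2 + 2 ≤ n) (hodd : Odd n) :
    ∃ (G : SimpleGraph (Fin n)) (V₁ V₂ : Finset (Fin n)) (v₀ : Fin n),
      _root_.Free G (completeGraph (Fin 3)) ∧
      Disjoint V₁ V₂ ∧ V₁ ∪ V₂ = Finset.univ ∧
      V₁.card = n / 2 ∧ V₂.card = (n + 1) / 2 ∧ v₀ ∈ V₂ ∧
      (∀ v, v ≠ v₀ → (G.neighborSet v).ncard = l) ∧
      (G.neighborSet v₀).ncard = (if Even (l * n) then l else l - 1) ∧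
      (∀ a b, G.Adj a b → a ≠ v₀ → b ≠ v₀ →
        ((a ∈ V₁ ∧ b ∈ V₂ \ {v₀}) ∨ (a ∈ V₂ \ {v₀} ∧ b ∈ V₁))) := by
  obtain ⟨m, rfl⟩ := hodd
  have hm : l * l + 1 ≤ 2 * m := by rw [sq] at hn; omega
  have : NeZero m := ⟨by rintro rfl; omega⟩
  let e : ReroutedCirculant.Vertex m ≃ Fin (2 * m + 1) :=
    Fintype.equivFinOfCardEq (by simp [Fintype.card_option]; ring)
  let f := e.toEmbedding
  refine ⟨(ReroutedCirculant.graph m l).map f, (Finset.univ.map .inl).map f,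
    (Finset.univ.map .inr).map f, f (.inr none), ?_, ?_, ?_, ?_, ?_, ?_, ?_, ?_, ?_⟩
  · exact free_completeGraph_of_cliqueFree (by simpa using ReroutedCirculant.cliqueFree_three hm)
  · exact (Finset.disjoint_map _).mpr (Finset.disjoint_map_inl_map_inr _ _)
  · refine Finset.eq_univ_of_forall fun v => ?_
    obtain ⟨x | x, rfl⟩ : ∃ x, f x = v := e.surjective v <;> simp [f]
  · simp; omega
  · simp; omega
  · simp
  · intro v hv
    obtain ⟨x, rfl⟩ : ∃ x, f x = v := e.surjective v
    rw [SimpleGraph.neighborSet_map, Set.ncard_image_of_injective _ f.injective]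
    exact ReroutedCirculant.ncard_neighborSet_of_ne_none hm (by rintro rfl; exact hv rfl)
  · rw [SimpleGraph.neighborSet_map, Set.ncard_image_of_injective _ f.injective,
      ReroutedCirculant.ncard_neighborSet_none hm]
    split_ifs with h <;> rw [Nat.even_mul, Nat.even_iff, Nat.even_iff] at h <;> omega
  · intro a b hab ha hb
    obtain ⟨x, rfl⟩ : ∃ x, f x = a := e.surjective a
    obtain ⟨y, rfl⟩ : ∃ y, f y = b := e.surjective b
    rw [SimpleGraph.map_adj_apply] at hab
    rcases x with a | _ | b <;> rcases y with a' | _ | b' <;> simp_all [f]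

theorem stmt7 (l n : ℕ) (hl : 1 ≤ l) (hn : l ^ 2 + 2 ≤ n) (hodd : Odd n) :
    ∃ (G : SimpleGraph (Fin n)) (V₁ V₂ : Finset (Fin n)) (v₀ : Fin n),
      _root_.Free G (completeGraph (Fin 3)) ∧
      Disjoint V₁ V₂ ∧ V₁ ∪ V₂ = Finset.univ ∧
      V₁.card = n / 2 ∧ V₂.card = (n + 1) / 2 ∧ v₀ ∈ V₂ ∧
      (∀ v, v ≠ v₀ → (G.neighborSet v).ncard = l) ∧
      (G.neighborSet v₀).ncard = (if Even (l * n) then l else l - 1) ∧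
      (∀ a b, G.Adj a b → a ≠ v₀ → b ≠ v₀ →
        ((a ∈ V₁ ∧ b ∈ V₂ \ {v₀}) ∨ (a ∈ V₂ \ {v₀} ∧ b ∈ V₁))) :=
  stmt7_general l n hn hodd
end

section
/- Let l ≥ 2 and s ≥ 0 be integers and let n be such that n−s ≥ (l−1)² + 2. Then there exists a {K_3, (s+1)S_l}-free graph on n vertices with exactly ⌈s/2⌉·⌊s/2⌋ + s·⌊(n−s)/2⌋ + ⌊(l−1)(n−s)/2⌋ edges. In particular, ex(n, {K_3, (s+1)S_l}) ≥ ⌈s/2⌉·⌊s/2⌋ + s·⌊(n−s)/2⌋ + ⌊(l−1)(n−s)/2⌋. -/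
open SimpleGraph

/-!
The graph consists of a complete bipartite graph `K_{⌈s/2⌉,⌊s/2⌋}` on `A ∪ B` together with a
triangle-free graph `H` of maximum degree `l - 1` and `⌊(l-1)(n-s)/2⌋` edges on the other `n - s`
vertices, split into halves `I₁`, `I₂` of size `⌊(n-s)/2⌋` (plus an apex `w` when `n - s` is odd),
with `A` complete to `I₁` and `B` complete to `I₂`. On `I₁ ∪ I₂` the graph `H` is an
`(l-1)`-regular circulant bipartite graph; the apex replaces `⌊(l-1)/2⌋` of its edges `t t'` by
the paths `t w t'`. Off `w` everything is bipartite with sides `A ∪ I₂` and `B ∪ I₁`, and the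
neighbourhood of `w` is independent, so there is no triangle. A star `S_l` cannot live in `H`,
so each of `s + 1` disjoint stars meets the `s` vertices of `A ∪ B`, which is impossible.
-/

open Finset

theorem le_exNum {n : ℕ} {P : SimpleGraph (Fin n) → Prop} {G : SimpleGraph (Fin n)} (hG : P G) :
    G.edgeSet.ncard ≤ exNum n P := by
  refine le_csSup ⟨Fintype.card (Sym2 (Fin n)), ?_⟩ ⟨G, hG, rfl⟩
  rintro m ⟨G', -, rfl⟩
  simpa [Set.ncard_univ, Nat.card_eq_fintype_card] using
    Set.ncard_le_ncard (Set.subset_univ G'.edgeSet)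

theorem free_triangle_of_two_coloring_off {V : Type*} (G : SimpleGraph V)
    (color : V → Prop) (W : Set V)
    (hc : ∀ x y, x ∉ W → y ∉ W → G.Adj x y → (color x ↔ ¬ color y))
    (hW : ∀ w ∈ W, ∀ x y, G.Adj w x → G.Adj w y → ¬ G.Adj x y) :
    _root_.Free G (completeGraph (Fin 3)) := by
  rintro ⟨f, hf⟩
  have h01 := hf 0 1 (by decide)
  have h02 := hf 0 2 (by decide)
  have h12 := hf 1 2 (by decide)
  by_cases h0 : f 0 ∈ W
  · exact hW _ h0 _ _ h01 h02 h12
  by_cases h1 : f 1 ∈ W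
  · exact hW _ h1 _ _ h01.symm h12 h02
  by_cases h2 : f 2 ∈ W
  · exact hW _ h2 _ _ h02.symm h12.symm h01
  have := hc _ _ h0 h1 h01
  have := hc _ _ h0 h2 h02
  have := hc _ _ h1 h2 h12
  tauto

theorem free_starForest_of_bounded_degree_off {V : Type*} (G : SimpleGraph V) (S : Finset V)
    (s l : ℕ) (hS : #S ≤ s)
    (hN : ∀ v ∉ S, ∃ N : Finset V, #N < l ∧ ∀ u ∉ S, G.Adj v u → u ∈ N) :
    _root_.Free G (starForest (s + 1) l) := by
  rintro ⟨f, hf⟩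
  have hit : ∀ i, ∃ p, f (i, p) ∈ S := by
    intro i
    by_contra! hout
    obtain ⟨N, hNl, hcenter⟩ := hN _ (hout (Sum.inl ()))
    have hleaf : ∀ j : Fin l, f (i, Sum.inr j) ∈ N := fun j =>
      hcenter _ (hout _) (hf _ _ (by simp [starForest]))
    have := card_le_card_of_injOn (s := univ) (fun j => f (i, Sum.inr j))
      (fun j _ => hleaf j) (fun j _ j' _ h => by simpa using f.injective h)
    simp at this
    omega
  choose p hp using hit
  have := card_le_card_of_injOn (s := univ) (fun i => f (i, p i))
    (fun i _ => hp i) (fun i _ i' _ h => congrArg Prod.fst (f.injective h))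
  simp at this
  omega

theorem ncard_edgeSet_fromRel_of_lt {V : Type*} [LinearOrder V] [Fintype V]
    (R : V → V → Prop) [DecidableRel R] (hR : ∀ x y, R x y → x < y) :
    (fromRel R).edgeSet.ncard = #{p : V × V | R p.1 p.2} := by
  classical
  rw [← coe_edgeFinset, Set.ncard_coe_finset]
  symm
  apply card_nbij (fun p => s(p.1, p.2))
  · rintro ⟨x, y⟩ h
    simp only [coe_filter, mem_univ, true_and, Set.mem_ofPred_eq] at h
    simp [(hR _ _ h).ne, h]
  · rintro ⟨x, y⟩ h ⟨x', y'⟩ h' he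
    simp only [coe_filter, mem_univ, true_and, Set.mem_ofPred_eq] at h h'
    rcases Sym2.eq_iff.mp he with ⟨rfl, rfl⟩ | ⟨rfl, rfl⟩
    · rfl
    · exact absurd (hR _ _ h) (hR _ _ h').asymm
  · intro e he
    induction e with | _ x y =>
    simp only [coe_edgeFinset, mem_edgeSet, fromRel_adj] at he
    rcases he.2 with h | h
    · exact ⟨(x, y), by simpa using h, rfl⟩
    · exact ⟨(y, x), by simpa using h, Sym2.eq_swap⟩

theorem card_filter_fin_prod_eq {n : ℕ} (R : ℕ → ℕ → Prop) [DecidableRel R] :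
    #{p : Fin n × Fin n | R p.1 p.2} = #((range n ×ˢ range n).filter fun p => R p.1 p.2) := by
  apply card_nbij (fun p => (p.1.val, p.2.val))
  · intro p hp
    simpa using hp
  · intro p _ p' _ h
    simp only [Prod.mk.injEq] at h
    exact Prod.ext (Fin.ext h.1) (Fin.ext h.2)
  · rintro ⟨x, y⟩ h
    simp only [coe_filter, mem_product, mem_range, Set.mem_ofPred_eq] at h
    exact ⟨(⟨x, h.1.1⟩, ⟨y, h.1.2⟩), by simpa using h.2, rfl⟩

theorem card_filter_prod_eq_sum {α β : Type*} (s : Finset α) (t : Finset β) (R : α → β → Prop)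
    [DecidableRel R] :
    #((s ×ˢ t).filter fun p => R p.1 p.2) = ∑ x ∈ s, #(t.filter (R x)) := by
  simp only [card_filter, sum_product]

theorem mul_div_two_eq (k m : ℕ) : k * m / 2 = m / 2 * k + if m % 2 = 1 then k / 2 else 0 := by
  rcases Nat.even_or_odd' m with ⟨q, rfl | rfl⟩
  · rw [mul_left_comm, Nat.mul_div_cancel_left _ two_pos, if_neg (by omega),
      Nat.mul_div_cancel_left _ two_pos, mul_comm, add_zero]
  · rw [mul_add, mul_left_comm, Nat.mul_add_div two_pos, if_pos (by omega),
      show (2 * q + 1) / 2 = q by omega, mul_one, mul_comm]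

theorem card_filter_val_mem_le {n : ℕ} (T : Finset ℕ) : #{u : Fin n | u.val ∈ T} ≤ #T :=
  card_le_card_of_injOn Fin.val (fun u hu => by simpa using hu) Fin.val_injective.injOn

namespace TriangleStarForest

def cyclicAdd (q t δ : ℕ) : ℕ := if t + δ < q then t + δ else t + δ - q

def cyclicSub (q u δ : ℕ) : ℕ := if δ ≤ u then u - δ else u + q - δ

variable (a s q h c : ℕ)

def offsets : Finset ℕ := insert (h + c) (range c)

def upper (t δ : ℕ) : ℕ :=
  if t < h ∧ δ = h + c then s + 2 * q else s + q + cyclicAdd q t δ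

def lower (u δ : ℕ) : ℕ :=
  if h + c ≤ u ∧ u < 2 * h + c ∧ δ = h + c then s + 2 * q else s + cyclicSub q u δ

/-- Vertices are `A = [0, a)`, `B = [a, s)`, `I₁ = [s, s + q)`, `I₂ = [s + q, s + 2q)` and the
apex `w = s + 2q`; `Adj x y` lists the edges with `x < y`. The vertex `s + t` of `I₁` is joined to
`s + q + (t + δ mod q)` for each offset `δ`, except that for `t < h` the offset `h + c` leads to
`w` instead. The offset `h + c` is separated from `0, …, c - 1` by a gap of `h`, which keeps the
neighbourhood of `w` independent. -/
def Adj (x y : ℕ) : Prop :=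
  (x < a ∧ a ≤ y ∧ y < s + q) ∨
  (a ≤ x ∧ x < s ∧ s + q ≤ y ∧ y < s + 2 * q) ∨
  (s ≤ x ∧ x < s + q ∧ ∃ δ ∈ offsets h c, y = upper s q h c (x - s) δ) ∨
  (y = s + 2 * q ∧ s + q + (h + c) ≤ x ∧ x < s + q + (2 * h + c))

instance : DecidableRel (Adj a s q h c) := fun _ _ => by unfold Adj; infer_instance

variable {a s q h c}

theorem mem_offsets {δ : ℕ} : δ ∈ offsets h c ↔ δ = h + c ∨ δ < c := by
  simp [offsets]

theorem adj_iff_of_lt (hs : a ≤ s) {x y : ℕ} (hx : x < a) :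
    Adj a s q h c x y ↔ a ≤ y ∧ y < s + q := by
  unfold Adj; grind

theorem adj_iff_of_mem_B {x y : ℕ} (hx₁ : a ≤ x) (hx₂ : x < s) :
    Adj a s q h c x y ↔ s + q ≤ y ∧ y < s + 2 * q := by
  unfold Adj; grind

theorem adj_iff_of_mem_I₁ (hs : a ≤ s) {x y : ℕ} (hx₁ : s ≤ x) (hx₂ : x < s + q) :
    Adj a s q h c x y ↔ y ∈ (offsets h c).image (upper s q h c (x - s)) := by
  unfold Adj; grind

theorem adj_iff_of_le {x y : ℕ} (hx : s + q ≤ x) :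
    Adj a s q h c x y ↔ y = s + 2 * q ∧ s + q + (h + c) ≤ x ∧ x < s + q + (2 * h + c) := by
  unfold Adj; grind

theorem card_offsets : #(offsets h c) = c + 1 := by
  rw [offsets, card_insert_of_notMem (by simp), card_range]

theorem adj_lt (hq : 2 * h + c ≤ q) {x y : ℕ} (hxy : Adj a s q h c x y) : x < y := by
  rcases hxy with hxy | hxy | ⟨-, hx, δ, -, rfl⟩ | hxy
  · omega
  · omega
  · unfold upper; split_ifs <;> omega
  · omega

def Side (a s q x : ℕ) : Prop := x < a ∨ s + q ≤ x ∧ x < s + 2 * q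

theorem le_apex_of_adj (hq : h + c < q) {x y : ℕ} (hxy : Adj a s q h c x y) : y ≤ s + 2 * q := by
  rcases hxy with hxy | hxy | ⟨-, hx, δ, hδ, rfl⟩ | hxy
  · omega
  · omega
  · rw [mem_offsets] at hδ
    unfold upper cyclicAdd
    split_ifs <;> omega
  · omega

theorem side_iff_not_of_adj (hs : a ≤ s) (hq : h + c < q) {x y : ℕ} (hxy : Adj a s q h c x y)
    (hy : y ≠ s + 2 * q) : (Side a s q x ↔ ¬ Side a s q y) := by
  unfold Side
  rcases hxy with hxy | hxy | ⟨hx₁, hx₂, δ, hδ, rfl⟩ | hxy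
  · omega
  · omega
  · rw [mem_offsets] at hδ
    unfold upper cyclicAdd at hy ⊢
    split_ifs at hy ⊢ <;> omega
  · omega

theorem adj_apex_iff (hq : h + c < q) {x : ℕ} :
    Adj a s q h c x (s + 2 * q) ↔
      (s ≤ x ∧ x < s + h) ∨ (s + q + (h + c) ≤ x ∧ x < s + q + (2 * h + c)) := by
  constructor
  · rintro (hx | hx | ⟨hx₁, hx₂, δ, hδ, hw⟩ | hx)
    · omega
    · omega
    · rw [mem_offsets] at hδ
      unfold upper cyclicAdd at hw
      split_ifs at hw <;> omega
    · omega
  · rintro (hx | hx)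
    · exact Or.inr (Or.inr (Or.inl ⟨hx.1, by omega, h + c, by simp [offsets], by
        unfold upper; rw [if_pos (by omega)]⟩))
    · exact Or.inr (Or.inr (Or.inr ⟨rfl, hx⟩))

theorem not_adj_apex (hq : 2 * h + c ≤ q) (x : ℕ) : ¬ Adj a s q h c (s + 2 * q) x := by
  rw [adj_iff_of_le (by omega)]
  omega

theorem not_adj_of_adj_apex (hs : a ≤ s) (hq₁ : h + c < q) (hq₂ : 2 * h + c ≤ q) {x y : ℕ}
    (hx : Adj a s q h c x (s + 2 * q)) (hy : Adj a s q h c y (s + 2 * q)) :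
    ¬ Adj a s q h c x y := by
  rw [adj_apex_iff hq₁] at hx hy
  rintro (hxy | hxy | ⟨hx₁, hx₂, δ, hδ, rfl⟩ | hxy)
  · omega
  · omega
  · rw [mem_offsets] at hδ
    unfold upper cyclicAdd at hy
    split_ifs at hy <;> omega
  · omega

variable (s q h c) in
def nbhd (v : ℕ) : Finset ℕ :=
  if v < s + q then (offsets h c).image (upper s q h c (v - s))
  else if v < s + 2 * q then (offsets h c).image (lower s q h c (v - s - q))
  else Ico s (s + h) ∪ Ico (s + q + (h + c)) (s + q + (2 * h + c))

theorem card_nbhd_le (hh : 2 * h ≤ c + 1) (v : ℕ) : #(nbhd s q h c v) ≤ c + 1 := by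
  unfold nbhd
  split_ifs
  · exact card_image_le.trans card_offsets.le
  · exact card_image_le.trans card_offsets.le
  · grw [card_union_le, Nat.card_Ico, Nat.card_Ico]
    omega

theorem mem_nbhd (hs : a ≤ s) (hq₁ : h + c < q) (hq₂ : 2 * h + c ≤ q) {v u : ℕ} (hv : s ≤ v)
    (hu : s ≤ u) (hvu : Adj a s q h c v u ∨ Adj a s q h c u v) : u ∈ nbhd s q h c v := by
  unfold nbhd
  split_ifs with h₁ h₂
  · rcases hvu with hvu | huv
    · exact (adj_iff_of_mem_I₁ hs hv h₁).mp hvu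
    · have := adj_lt hq₂ huv
      rw [adj_iff_of_mem_I₁ hs hu (by omega), mem_image] at huv
      obtain ⟨δ, hδ, rfl⟩ := huv
      unfold upper at h₁; split_ifs at h₁ <;> omega
  · simp only [mem_image, mem_offsets]
    rcases hvu with hvu | huv
    · rw [adj_iff_of_le (by omega)] at hvu
      exact ⟨h + c, Or.inl rfl, by unfold lower; rw [if_pos (by omega)]; omega⟩
    · have := adj_lt hq₂ huv
      by_cases hu' : u < s + q
      · rw [adj_iff_of_mem_I₁ hs hu hu', mem_image] at huv
        obtain ⟨δ, hδ, rfl⟩ := huv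
        refine ⟨δ, mem_offsets.mp hδ, ?_⟩
        rw [mem_offsets] at hδ
        unfold upper cyclicAdd at h₂ h₁ ⊢
        unfold lower cyclicSub
        split_ifs at h₂ h₁ ⊢ <;> omega
      · rw [adj_iff_of_le (by omega)] at huv
        omega
  · simp only [mem_union, mem_Ico]
    rcases hvu with hvu | huv
    · rw [adj_iff_of_le (by omega)] at hvu
      omega
    · obtain rfl : v = s + 2 * q := by have := le_apex_of_adj hq₁ huv; omega
      exact (adj_apex_iff hq₁).mp huv

theorem upper_injOn (hq : h + c < q) (t : ℕ) :
    Set.InjOn (upper s q h c t) (offsets h c) := by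
  intro δ hδ δ' hδ' he
  rw [mem_coe, mem_offsets] at hδ hδ'
  unfold upper cyclicAdd at he
  split_ifs at he <;> omega

variable {n : ℕ}

theorem card_filter_adj_of_lt (hs : a ≤ s) {x : ℕ} (hx : x < a) (hn : s + q ≤ n) :
    #((range n).filter (Adj a s q h c x)) = s + q - a := by
  have hrow : (range n).filter (Adj a s q h c x) = Ico a (s + q) := by
    ext y
    simp only [mem_filter, adj_iff_of_lt hs hx, mem_range, mem_Ico]
    omega
  rw [hrow, Nat.card_Ico]

theorem card_filter_adj_of_mem_B {x : ℕ} (hx₁ : a ≤ x) (hx₂ : x < s) (hn : s + 2 * q ≤ n) :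
    #((range n).filter (Adj a s q h c x)) = q := by
  have hrow : (range n).filter (Adj a s q h c x) = Ico (s + q) (s + 2 * q) := by
    ext y
    simp only [mem_filter, adj_iff_of_mem_B hx₁ hx₂, mem_range, mem_Ico]
    omega
  rw [hrow, Nat.card_Ico]
  omega

theorem card_filter_adj_of_mem_I₁ (hs : a ≤ s) (hq : h + c < q) {x : ℕ} (hx₁ : s ≤ x)
    (hx₂ : x < s + q) (hn : s + 2 * q ≤ n) (hw : 0 < h → s + 2 * q < n) :
    #((range n).filter (Adj a s q h c x)) = c + 1 := by
  have hrow : (range n).filter (Adj a s q h c x) = (offsets h c).image (upper s q h c (x - s)) := by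
    ext y
    rw [mem_filter, adj_iff_of_mem_I₁ hs hx₁ hx₂, mem_range, and_iff_right_iff_imp, mem_image]
    rintro ⟨δ, hδ, rfl⟩
    rw [mem_offsets] at hδ
    unfold upper cyclicAdd
    split_ifs <;> omega
  rw [hrow, card_image_of_injOn (upper_injOn hq _), card_offsets]

theorem card_filter_adj_of_le {x : ℕ} (hx : s + q ≤ x) (hw : 0 < h → s + 2 * q < n) :
    #((range n).filter (Adj a s q h c x)) =
      if x ∈ Ico (s + q + (h + c)) (s + q + (2 * h + c)) then 1 else 0 := by
  simp only [adj_iff_of_le hx, mem_Ico]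
  split_ifs with hJ
  · rw [card_eq_one]
    exact ⟨s + 2 * q, by ext y; simp only [mem_filter, mem_range, mem_singleton]; omega⟩
  · simp [hJ]

theorem card_filter_adj_prod (hs : a ≤ s) (hq₁ : h + c < q) (hq₂ : 2 * h + c ≤ q)
    (hn : s + 2 * q ≤ n) (hw : 0 < h → s + 2 * q < n) :
    #((range n ×ˢ range n).filter fun p => Adj a s q h c p.1 p.2) =
      a * (s + q - a) + (s - a) * q + q * (c + 1) + h := by
  rw [card_filter_prod_eq_sum, ← sum_range_add_sum_Ico _ (by omega : a ≤ n),
    ← sum_Ico_consecutive _ hs (by omega), ← sum_Ico_consecutive _ (Nat.le_add_right s q) (by omega)]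
  have hA : ∑ x ∈ range a, #((range n).filter (Adj a s q h c x)) = a * (s + q - a) := by
    rw [sum_congr rfl fun x hx => card_filter_adj_of_lt hs (mem_range.mp hx) (by omega),
      sum_const, card_range, smul_eq_mul]
  have hB : ∑ x ∈ Ico a s, #((range n).filter (Adj a s q h c x)) = (s - a) * q := by
    rw [sum_congr rfl fun x hx => card_filter_adj_of_mem_B (mem_Ico.mp hx).1 (mem_Ico.mp hx).2 hn,
      sum_const, Nat.card_Ico, smul_eq_mul]
  have hI : ∑ x ∈ Ico s (s + q), #((range n).filter (Adj a s q h c x)) = q * (c + 1) := by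
    rw [sum_congr rfl fun x hx => card_filter_adj_of_mem_I₁ hs hq₁ (mem_Ico.mp hx).1
      (mem_Ico.mp hx).2 hn hw, sum_const, Nat.card_Ico, smul_eq_mul, Nat.add_sub_cancel_left]
  have hJ : ∑ x ∈ Ico (s + q) n, #((range n).filter (Adj a s q h c x)) = h := by
    rw [sum_congr rfl fun x hx => card_filter_adj_of_le (mem_Ico.mp hx).1 hw, sum_ite_mem,
      inter_eq_right.mpr, sum_const, Nat.card_Ico, smul_eq_mul, mul_one]
    · omega
    · intro x; simp only [mem_Ico]; omega
  omega

variable (a s q h c) in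
def graph (n : ℕ) : SimpleGraph (Fin n) := fromRel fun x y => Adj a s q h c x y

theorem free_completeGraph_graph (hs : a ≤ s) (hq₁ : h + c < q) (hq₂ : 2 * h + c ≤ q) :
    _root_.Free (graph a s q h c n) (completeGraph (Fin 3)) := by
  refine free_triangle_of_two_coloring_off _ (fun x => Side a s q x)
    {v | v.val = s + 2 * q} ?_ ?_
  · rintro x y hx hy ⟨-, hxy | hyx⟩
    · exact side_iff_not_of_adj hs hq₁ hxy hy
    · exact (not_iff_comm.mp (side_iff_not_of_adj hs hq₁ hyx hx).symm).symm
  · rintro w (hw : w.val = _) x y ⟨-, hx⟩ ⟨-, hy⟩ ⟨-, hxy⟩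
    dsimp only at hx hy hxy
    rw [hw] at hx hy
    replace hx := hx.resolve_left (not_adj_apex hq₂ _)
    replace hy := hy.resolve_left (not_adj_apex hq₂ _)
    rcases hxy with hxy | hxy
    · exact not_adj_of_adj_apex hs hq₁ hq₂ hx hy hxy
    · exact not_adj_of_adj_apex hs hq₁ hq₂ hy hx hxy

theorem free_starForest_graph (hs : a ≤ s) (hq₁ : h + c < q) (hq₂ : 2 * h + c ≤ q)
    {l : ℕ} (hl : c + 1 < l) (hh : 2 * h ≤ c + 1) :
    _root_.Free (graph a s q h c n) (starForest (s + 1) l) := by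
  refine free_starForest_of_bounded_degree_off _ {v : Fin n | v.val ∈ range s} s l
    ((card_filter_val_mem_le _).trans (card_range s).le) fun v hv =>
      ⟨({u : Fin n | u.val ∈ nbhd s q h c v} : Finset (Fin n)),
      (card_filter_val_mem_le _).trans_lt ((card_nbhd_le hh _).trans_lt hl), fun u hu huv => ?_⟩
  simp only [mem_filter, mem_univ, true_and, mem_range, not_lt] at hv hu ⊢
  exact mem_nbhd hs hq₁ hq₂ hv hu huv.2

theorem ncard_edgeSet_graph (hs : a ≤ s) (hq₁ : h + c < q) (hq₂ : 2 * h + c ≤ q)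
    (hn : s + 2 * q ≤ n) (hw : 0 < h → s + 2 * q < n) :
    (graph a s q h c n).edgeSet.ncard = a * (s + q - a) + (s - a) * q + q * (c + 1) + h := by
  rw [graph, ncard_edgeSet_fromRel_of_lt (fun x y : Fin n => Adj a s q h c x y)
      fun x y hxy => adj_lt hq₂ hxy, card_filter_fin_prod_eq,
    card_filter_adj_prod hs hq₁ hq₂ hn hw]

end TriangleStarForest

theorem stmt10 (l s n : ℕ) (hl : 2 ≤ l) (hn : (l - 1) ^ 2 + 2 ≤ n - s) :
    (∃ G : SimpleGraph (Fin n),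
        _root_.Free G (completeGraph (Fin 3)) ∧ _root_.Free G (starForest (s + 1) l) ∧
        G.edgeSet.ncard =
          (s + 1) / 2 * (s / 2) + s * ((n - s) / 2) + (l - 1) * (n - s) / 2) ∧
    (s + 1) / 2 * (s / 2) + s * ((n - s) / 2) + (l - 1) * (n - s) / 2 ≤
      exNum n (fun G => _root_.Free G (completeGraph (Fin 3)) ∧ _root_.Free G (starForest (s + 1) l)) := by
  set q := (n - s) / 2
  -- the apex exists only for odd `n - s`; `h = 0` switches it off
  set h := if (n - s) % 2 = 1 then (l - 1) / 2 else 0 with hh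
  have hsize : 4 * (l - 1) ≤ n - s + 2 := by nlinarith [sq_nonneg ((l - 1 : ℕ) - 2 : ℤ)]
  have hs : (s + 1) / 2 ≤ s := by omega
  have hq₁ : h + (l - 2) < q := by split_ifs at hh <;> omega
  have hq₂ : 2 * h + (l - 2) ≤ q := by split_ifs at hh <;> omega
  set G := TriangleStarForest.graph ((s + 1) / 2) s q h (l - 2) n
  have hfree : _root_.Free G (completeGraph (Fin 3)) ∧ _root_.Free G (starForest (s + 1) l) :=
    ⟨TriangleStarForest.free_completeGraph_graph hs hq₁ hq₂,
      TriangleStarForest.free_starForest_graph hs hq₁ hq₂ (by omega) (by split_ifs at hh <;> omega)⟩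
  have hcard := TriangleStarForest.ncard_edgeSet_graph (n := n) hs hq₁ hq₂ (by omega)
    (by split_ifs at hh <;> omega)
  have harith : (s + 1) / 2 * (s + q - (s + 1) / 2) + (s - (s + 1) / 2) * q + q * (l - 2 + 1) + h
      = (s + 1) / 2 * (s / 2) + s * q + (l - 1) * (n - s) / 2 := by
    rw [mul_div_two_eq, ← hh, show s + q - (s + 1) / 2 = s / 2 + q by omega,
      show s - (s + 1) / 2 = s / 2 by omega, show l - 2 + 1 = l - 1 by omega]
    have hsplit : (s + 1) / 2 + s / 2 = s := by omega
    linear_combination q * hsplit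
  rw [harith] at hcard
  exact ⟨⟨G, hfree.1, hfree.2, hcard⟩, hcard ▸ le_exNum hfree⟩
end
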